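/- Let φ(z) = ηz be a rotation of the unit disk, and let ψ = τ·v where τ is a finite Blaschke product and v ∈ H^∞ with 1/v ∈ H^∞. Suppose q > 0 and n_0 ∈ ℕ satisfy q^{n_0} < inf_{z∈D} |v_(n_0)(z)|, where v_(n) = ∏_{j=0}^{n-1} v∘φ_j. Then for every λ with |λ| < q there exist n ∈ ℕ and c > 0 (independent of f) such that ‖C_{ψ,φ}^n f‖ ≥ c‖f‖ > |λ|^n ‖f‖/2 for all f ∈ A^p_α with f ≠ 0; in particular C_{ψ,φ} - λ is bounded below on A^p_α. -/

import Mathlib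

open Metric Set MeasureTheory Filter Finset
open scoped ENNReal NNReal Real

set_option maxHeartbeats 1000000

/-- Membership in the weighted Bergman space `A^p_α`. -/
def MemBergman (α p : ℝ) (f : ℂ → ℂ) : Prop :=
  AnalyticOn ℂ f (ball 0 1) ∧
    IntegrableOn (fun z => ‖f z‖ ^ p * (1 - ‖z‖ ^ 2) ^ α) (ball (0:ℂ) 1)

/-- The `A^p_α` norm: `‖f‖ = (∫_D |f|^p dA_α)^{1/p}`. -/
noncomputable def bergNorm (α p : ℝ) (f : ℂ → ℂ) : ℝ :=
  (∫ z in ball (0:ℂ) 1,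
    ‖f z‖ ^ p * (((1 + α) / Real.pi) * (1 - ‖z‖ ^ 2) ^ α)) ^ p⁻¹


noncomputable def St19w (α : ℝ) (z : ℂ) : ℝ := ((1 + α) / Real.pi) * (1 - ‖z‖ ^ 2) ^ α

noncomputable def St19bw (α : ℝ) (z : ℂ) : ℝ≥0∞ := ENNReal.ofReal (St19w α z)

noncomputable def St19J (α p : ℝ) (s : Set ℂ) (f : ℂ → ℂ) : ℝ≥0∞ :=
  ∫⁻ z in s, (‖f z‖₊ : ℝ≥0∞) ^ p * St19bw α z

noncomputable def St19nB (α p : ℝ) (f : ℂ → ℂ) : ℝ≥0∞ := (St19J α p (ball 0 1) f) ^ p⁻¹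

lemma St19bw_measurable (α : ℝ) : Measurable (St19bw α) := by
  apply Measurable.ennreal_ofReal
  exact (measurable_const.mul (((measurable_norm).pow_const 2).const_sub 1 |>.pow_const α))

lemma St19w_nonneg {α : ℝ} (hα : -1 < α) {z : ℂ} (hz : ‖z‖ < 1) : 0 ≤ St19w α z := by
  have h1 : (0:ℝ) ≤ 1 - ‖z‖ ^ 2 := by nlinarith [norm_nonneg z]
  exact mul_nonneg (div_nonneg (by linarith) Real.pi_nonneg) (Real.rpow_nonneg h1 α)


lemma ofReal_norm_eq_coe_nnnorm {E : Type*} [SeminormedAddGroup E] (a : E) :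
    ENNReal.ofReal ‖a‖ = (‖a‖₊ : ℝ≥0∞) := ofReal_norm a

/-- Bridge: bergNorm as toReal of the lintegral functional. -/
lemma St19_bridge (α p : ℝ) (hα : -1 < α) (hp : 1 ≤ p) (f : ℂ → ℂ)
    (hf : ContinuousOn f (ball 0 1)) :
    bergNorm α p f = (St19J α p (ball 0 1) f).toReal ^ p⁻¹ := by
  have hp0 : 0 ≤ p := by linarith
  unfold bergNorm
  congr 1
  have h1 : 0 ≤ᵐ[volume.restrict (ball (0:ℂ) 1)]
      fun z => ‖f z‖ ^ p * (((1 + α) / Real.pi) * (1 - ‖z‖ ^ 2) ^ α) := by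
    filter_upwards [self_mem_ae_restrict (measurableSet_ball)] with z hz
    exact mul_nonneg (Real.rpow_nonneg (norm_nonneg _) _) (St19w_nonneg hα (by simpa using hz))
  have h2 : AEStronglyMeasurable
      (fun z => ‖f z‖ ^ p * (((1 + α) / Real.pi) * (1 - ‖z‖ ^ 2) ^ α))
      (volume.restrict (ball (0:ℂ) 1)) := by
    apply ContinuousOn.aestronglyMeasurable _ measurableSet_ball
    apply ContinuousOn.mul
    · exact (hf.norm).rpow_const (fun x _ => Or.inr hp0)
    · apply ContinuousOn.mul continuousOn_const
      apply ContinuousOn.rpow_const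
      · exact (continuous_const.sub ((continuous_norm).pow 2)).continuousOn
      · intro z hz
        left
        have : ‖z‖ < 1 := by simpa using hz
        nlinarith [norm_nonneg z]
  rw [integral_eq_lintegral_of_nonneg_ae h1 h2]
  congr 1
  apply setLIntegral_congr_fun measurableSet_ball
  intro z hz
  dsimp only
  rw [ENNReal.ofReal_mul (Real.rpow_nonneg (norm_nonneg _) _),
    ← ENNReal.ofReal_rpow_of_nonneg (norm_nonneg _) hp0, ofReal_norm_eq_coe_nnnorm]
  rfl



lemma St19_aem {f : ℂ → ℂ} {s : Set ℂ} (hs : MeasurableSet s) (hf : ContinuousOn f s) :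
    AEMeasurable (fun z => (‖f z‖₊ : ℝ≥0∞)) (volume.restrict s) :=
  (hf.aemeasurable hs).enorm

lemma St19J_congr {α p : ℝ} {s : Set ℂ} (hs : MeasurableSet s) {f g : ℂ → ℂ}
    (h : EqOn f g s) : St19J α p s f = St19J α p s g := by
  apply setLIntegral_congr_fun hs
  intro z hz
  dsimp only
  rw [h hz]

lemma St19J_mono {α p : ℝ} (hp0 : 0 ≤ p) {s : Set ℂ} (hs : MeasurableSet s)
    {u w : ℂ → ℂ} {C : ℝ} (hC : 0 ≤ C) (h : ∀ z ∈ s, ‖u z‖ ≤ C * ‖w z‖) :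
    St19J α p s u ≤ ENNReal.ofReal C ^ p * St19J α p s w := by
  unfold St19J
  rw [← lintegral_const_mul' _ _ (ENNReal.rpow_ne_top_of_nonneg hp0 ENNReal.ofReal_ne_top)]
  apply setLIntegral_mono' hs
  intro z hz
  have h1 : (‖u z‖₊ : ℝ≥0∞) ≤ ENNReal.ofReal C * (‖w z‖₊ : ℝ≥0∞) := by
    rw [← ofReal_norm_eq_coe_nnnorm, ← ofReal_norm_eq_coe_nnnorm, ← ENNReal.ofReal_mul hC]
    exact ENNReal.ofReal_le_ofReal (h z hz)
  calc (‖u z‖₊ : ℝ≥0∞) ^ p * St19bw α z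
      ≤ (ENNReal.ofReal C * (‖w z‖₊ : ℝ≥0∞)) ^ p * St19bw α z :=
        mul_le_mul_left (ENNReal.rpow_le_rpow h1 hp0) _
    _ = ENNReal.ofReal C ^ p * ((‖w z‖₊ : ℝ≥0∞) ^ p * St19bw α z) := by
        rw [ENNReal.mul_rpow_of_nonneg _ _ hp0, mul_assoc]

lemma St19nB_mono {α p : ℝ} (hp : 1 ≤ p) {u w : ℂ → ℂ} {C : ℝ} (hC : 0 ≤ C)
    (h : ∀ z ∈ ball (0:ℂ) 1, ‖u z‖ ≤ C * ‖w z‖) :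
    St19nB α p u ≤ ENNReal.ofReal C * St19nB α p w := by
  have hp0 : (0:ℝ) < p := by linarith
  have := ENNReal.rpow_le_rpow (St19J_mono (α := α) hp0.le measurableSet_ball hC h)
    (inv_nonneg.2 hp0.le)
  refine this.trans_eq ?_
  rw [ENNReal.mul_rpow_of_nonneg _ _ (inv_nonneg.2 hp0.le), ← ENNReal.rpow_mul,
    mul_inv_cancel₀ hp0.ne', ENNReal.rpow_one]
  rfl

lemma St19J_rot {α p : ℝ} (c : ℂ) (hc : ‖c‖ = 1) {s : Set ℂ} (hs : MeasurableSet s)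
    (hinv : ∀ z : ℂ, c * z ∈ s ↔ z ∈ s) (u : ℂ → ℂ) :
    St19J α p s (fun z => u (c * z)) = St19J α p s u := by
  have hmem : c ∈ Submonoid.unitSphere ℂ := by
    show c ∈ Metric.sphere (0:ℂ) 1
    simpa [mem_sphere_zero_iff_norm] using hc
  set cc : Circle := ⟨c, hmem⟩ with hcc
  have hT : MeasurePreserving (fun z : ℂ => c * z) volume volume := by
    have h1 := (rotation cc).measurePreserving
    convert h1 using 1
    · rfl
    · rfl
    · funext z; rfl
  have hemb : MeasurableEmbedding (fun z : ℂ => c * z) := by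
    have h1 := (rotation cc).toHomeomorph.measurableEmbedding
    convert h1 using 1
    funext z; rfl
  have key := hT.setLIntegral_comp_preimage_emb hemb
    (fun z => (‖u z‖₊ : ℝ≥0∞) ^ p * St19bw α z) s
  have hpre : (fun z : ℂ => c * z) ⁻¹' s = s := by
    ext z; exact hinv z
  rw [hpre] at key
  unfold St19J
  rw [← key]
  apply setLIntegral_congr_fun hs
  intro z hz
  dsimp only
  have : St19bw α (c * z) = St19bw α z := by
    unfold St19bw St19w
    rw [norm_mul, hc, one_mul]
  rw [this]

lemma St19J_lt_top {α p : ℝ} (hp : 1 ≤ p) {f : ℂ → ℂ}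
    (hfi : IntegrableOn (fun z => ‖f z‖ ^ p * (1 - ‖z‖ ^ 2) ^ α) (ball (0:ℂ) 1)) :
    St19J α p (ball 0 1) f < ∞ := by
  have hp0 : (0:ℝ) ≤ p := by linarith
  have heq : St19J α p (ball 0 1) f
      = ∫⁻ z in ball (0:ℂ) 1, ENNReal.ofReal (‖f z‖ ^ p * St19w α z) := by
    apply lintegral_congr
    intro z
    rw [ENNReal.ofReal_mul (Real.rpow_nonneg (norm_nonneg _) _),
      ← ENNReal.ofReal_rpow_of_nonneg (norm_nonneg _) hp0, ofReal_norm_eq_coe_nnnorm]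
    rfl
  rw [heq]
  have : (fun z => ‖f z‖ ^ p * St19w α z)
      = fun z => ((1 + α) / Real.pi) * (‖f z‖ ^ p * (1 - ‖z‖ ^ 2) ^ α) := by
    funext z; unfold St19w; ring
  apply Integrable.lintegral_lt_top
  rw [this]
  exact hfi.const_mul _
lemma St19J_eq_Lp {α p : ℝ} (hp : 1 ≤ p) (s : Set ℂ) (f : ℂ → ℂ) :
    St19J α p s f
      = ∫⁻ z in s, ((‖f z‖₊ : ℝ≥0∞) * (St19bw α z) ^ p⁻¹) ^ p := by
  have hp0 : (0:ℝ) < p := by linarith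
  apply lintegral_congr
  intro z
  rw [ENNReal.mul_rpow_of_nonneg _ _ hp0.le, ← ENNReal.rpow_mul,
    inv_mul_cancel₀ hp0.ne', ENNReal.rpow_one]

lemma St19nB_add {α p : ℝ} (hp : 1 ≤ p) {f g : ℂ → ℂ}
    (hf : ContinuousOn f (ball 0 1)) (hg : ContinuousOn g (ball 0 1)) :
    St19nB α p (fun z => f z + g z) ≤ St19nB α p f + St19nB α p g := by
  have hp0 : (0:ℝ) < p := by linarith
  have hFf : AEMeasurable (fun z => (‖f z‖₊ : ℝ≥0∞) * (St19bw α z) ^ p⁻¹)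
      (volume.restrict (ball (0:ℂ) 1)) :=
    (St19_aem measurableSet_ball hf).mul ((St19bw_measurable α).pow_const p⁻¹).aemeasurable
  have hFg : AEMeasurable (fun z => (‖g z‖₊ : ℝ≥0∞) * (St19bw α z) ^ p⁻¹)
      (volume.restrict (ball (0:ℂ) 1)) :=
    (St19_aem measurableSet_ball hg).mul ((St19bw_measurable α).pow_const p⁻¹).aemeasurable
  have key := ENNReal.lintegral_Lp_add_le hFf hFg hp
  unfold St19nB
  rw [St19J_eq_Lp hp, St19J_eq_Lp hp, St19J_eq_Lp hp]
  have mono : (∫⁻ z in ball (0:ℂ) 1, ((‖f z + g z‖₊ : ℝ≥0∞) * (St19bw α z) ^ p⁻¹) ^ p)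
      ≤ ∫⁻ z in ball (0:ℂ) 1,
          (((fun z => (‖f z‖₊ : ℝ≥0∞) * (St19bw α z) ^ p⁻¹)
            + fun z => (‖g z‖₊ : ℝ≥0∞) * (St19bw α z) ^ p⁻¹) z) ^ p := by
    apply lintegral_mono
    intro z
    apply ENNReal.rpow_le_rpow _ hp0.le
    simp only [Pi.add_apply]
    rw [← add_mul]
    apply mul_le_mul_left
    exact_mod_cast nnnorm_add_le (f z) (g z)
  calc (∫⁻ z in ball (0:ℂ) 1, ((‖f z + g z‖₊ : ℝ≥0∞) * (St19bw α z) ^ p⁻¹) ^ p) ^ p⁻¹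
      ≤ (∫⁻ z in ball (0:ℂ) 1,
          (((fun z => (‖f z‖₊ : ℝ≥0∞) * (St19bw α z) ^ p⁻¹)
            + fun z => (‖g z‖₊ : ℝ≥0∞) * (St19bw α z) ^ p⁻¹) z) ^ p) ^ p⁻¹ :=
        ENNReal.rpow_le_rpow mono (inv_nonneg.2 hp0.le)
    _ ≤ _ := by
        rw [(by rw [one_div] : (1:ℝ)/p = p⁻¹)] at key
        exact key

/-- Circle-average Cauchy bound for one radius. -/
lemma St19_circle_bound {f : ℂ → ℂ} (hf : AnalyticOn ℂ f (ball 0 1))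
    {R R₁ R₂ : ℝ} (hR0 : 0 < R) (h1 : R < R₁) (h2 : R₁ < R₂) (h3 : R₂ < 1)
    {ζ : ℂ} (hζ : ‖ζ‖ ≤ R) {ρ : ℝ} (hρ1 : R₁ ≤ ρ) (hρ2 : ρ ≤ R₂) :
    2 * π * (R₁ - R) * ‖f ζ‖ ≤ ∫ θ in (-π)..π, ρ * ‖f (circleMap 0 ρ θ)‖ := by
  have hρpos : 0 < ρ := by linarith
  have hρlt : ρ < 1 := by linarith
  have hsub : closedBall (0:ℂ) ρ ⊆ ball 0 1 := closedBall_subset_ball hρlt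
  have hdc : DiffContOnCl ℂ f (ball 0 ρ) := by
    apply DifferentiableOn.diffContOnCl
    rw [closure_ball (0:ℂ) (ne_of_gt hρpos)]
    exact (hf.differentiableOn).mono hsub
  have hζρ : ζ ∈ ball (0:ℂ) ρ := by
    rw [mem_ball_zero_iff]; linarith
  have hcau := hdc.circleIntegral_sub_inv_smul hζρ
  have hnorm : ‖(2 * ↑π * Complex.I : ℂ) • f ζ‖ = 2 * π * ‖f ζ‖ := by
    rw [norm_smul]
    congr 1
    simp [norm_mul, Real.pi_nonneg]
  -- continuity of the integrand pieces on [0, 2π] (indeed everywhere)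
  have hcont : Continuous fun θ : ℝ => ρ * ‖f (circleMap 0 ρ θ)‖ := by
    apply continuous_const.mul
    apply Continuous.norm
    apply ContinuousOn.comp_continuous hf.continuousOn (continuous_circleMap 0 ρ)
    intro θ
    rw [mem_ball_zero_iff]
    calc ‖circleMap 0 ρ θ‖ = |ρ| := by rw [norm_circleMap_zero]
      _ < 1 := by rw [abs_of_pos hρpos]; exact hρlt
  have hcont2 : Continuous fun θ : ℝ =>
      deriv (circleMap 0 ρ) θ • ((circleMap 0 ρ θ - ζ)⁻¹ • f (circleMap 0 ρ θ)) := by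
    simp only [deriv_circleMap]
    apply Continuous.smul ((continuous_circleMap 0 ρ).mul continuous_const)
    apply Continuous.smul (f := fun θ => (circleMap 0 ρ θ - ζ)⁻¹) (g := fun θ => f (circleMap 0 ρ θ))
    · apply Continuous.inv₀ ((continuous_circleMap 0 ρ).sub continuous_const)
      intro θ
      intro hzero
      rw [Pi.sub_apply] at hzero
      rw [sub_eq_zero] at hzero
      have hn : ‖circleMap 0 ρ θ‖ = ρ := by
        rw [norm_circleMap_zero, abs_of_pos hρpos]
      rw [hzero] at hn
      linarith
    · apply ContinuousOn.comp_continuous hf.continuousOn (continuous_circleMap 0 ρ)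
      intro θ
      rw [mem_ball_zero_iff]
      calc ‖circleMap 0 ρ θ‖ = |ρ| := by rw [norm_circleMap_zero]
        _ < 1 := by rw [abs_of_pos hρpos]; exact hρlt
  have hlow : ∀ θ : ℝ, R₁ - R ≤ ‖circleMap 0 ρ θ - ζ‖ := by
    intro θ
    have h := norm_sub_norm_le (circleMap 0 ρ θ) ζ
    have h5 : ‖circleMap 0 ρ θ‖ = ρ := by
      rw [norm_circleMap_zero, abs_of_pos hρpos]
    rw [h5] at h
    linarith
  have hb1 : ‖∮ z in C(0, ρ), (z - ζ)⁻¹ • f z‖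
      ≤ ∫ θ in (0:ℝ)..(2*π), (ρ * ‖f (circleMap 0 ρ θ)‖) * (R₁ - R)⁻¹ := by
    refine (intervalIntegral.norm_integral_le_integral_norm (by positivity)).trans ?_
    apply intervalIntegral.integral_mono_on (by positivity)
    · exact (hcont2.norm).intervalIntegrable _ _
    · exact ((hcont.mul continuous_const)).intervalIntegrable _ _
    · intro θ hθ
      rw [norm_smul, norm_smul, deriv_circleMap, norm_inv]
      have h5 : ‖circleMap 0 ρ θ * Complex.I‖ = ρ := by
        rw [norm_mul, Complex.norm_I, mul_one, norm_circleMap_zero,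
          abs_of_pos hρpos]
      rw [h5]
      have h6 : ‖circleMap 0 ρ θ - ζ‖⁻¹ ≤ (R₁ - R)⁻¹ := by
        apply inv_anti₀ (by linarith) (hlow θ)
      calc ρ * (‖circleMap 0 ρ θ - ζ‖⁻¹ * ‖f (circleMap 0 ρ θ)‖)
          ≤ ρ * ((R₁ - R)⁻¹ * ‖f (circleMap 0 ρ θ)‖) := by
            apply mul_le_mul_of_nonneg_left _ hρpos.le
            exact mul_le_mul_of_nonneg_right h6 (norm_nonneg _)
        _ = ρ * ‖f (circleMap 0 ρ θ)‖ * (R₁ - R)⁻¹ := by ring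
  rw [hcau, hnorm] at hb1
  rw [intervalIntegral.integral_mul_const] at hb1
  have hshift : (∫ θ in (0:ℝ)..(2*π), ρ * ‖f (circleMap 0 ρ θ)‖)
      = ∫ θ in (-π)..π, ρ * ‖f (circleMap 0 ρ θ)‖ := by
    have hper : Function.Periodic (fun θ : ℝ => ρ * ‖f (circleMap 0 ρ θ)‖) (2*π) :=
      (periodic_circleMap 0 ρ).comp fun z => ρ * ‖f z‖
    have := hper.intervalIntegral_add_eq 0 (-π)
    simpa [(by ring : -π + 2*π = π)] using this
  rw [hshift] at hb1
  have hfin : 2 * π * ‖f ζ‖ ≤ (∫ θ in (-π)..π, ρ * ‖f (circleMap 0 ρ θ)‖) * (R₁ - R)⁻¹ := hb1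
  have hpos : (0:ℝ) < R₁ - R := by linarith
  calc 2 * π * (R₁ - R) * ‖f ζ‖ = (2 * π * ‖f ζ‖) * (R₁ - R) := by ring
    _ ≤ ((∫ θ in (-π)..π, ρ * ‖f (circleMap 0 ρ θ)‖) * (R₁ - R)⁻¹) * (R₁ - R) :=
        mul_le_mul_of_nonneg_right hfin hpos.le
    _ = _ := by field_simp

lemma St19_polar {f : ℂ → ℂ} (hf : ContinuousOn f (ball 0 1)) {R₁ R₂ : ℝ}
    (h0 : 0 < R₁) (h2 : R₁ < R₂) (h3 : R₂ < 1) :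
    (∫ q in Ioc R₁ R₂ ×ˢ Ioc (-π) π, q.1 * ‖f (circleMap 0 q.1 q.2)‖)
      = ∫ z in {w : ℂ | R₁ < ‖w‖ ∧ ‖w‖ ≤ R₂}, ‖f z‖ := by
  have hA : {w : ℂ | R₁ < ‖w‖ ∧ ‖w‖ ≤ R₂} = (fun w : ℂ => ‖w‖) ⁻¹' Ioc R₁ R₂ := rfl
  have hAmeas : MeasurableSet {w : ℂ | R₁ < ‖w‖ ∧ ‖w‖ ≤ R₂} := by
    rw [hA]; exact measurable_norm measurableSet_Ioc
  set A := {w : ℂ | R₁ < ‖w‖ ∧ ‖w‖ ≤ R₂} with hAdef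
  set g : ℂ → ℝ := A.indicator (fun z => ‖f z‖) with hg
  have key := Complex.integral_comp_polarCoord_symm g
  have hRHS : ∫ z, g z = ∫ z in A, ‖f z‖ := integral_indicator hAmeas
  have hsymm_cont : Continuous (fun p : ℝ × ℝ => (Complex.polarCoord.symm p : ℂ)) := by
    simp only [Complex.polarCoord_symm_apply]
    exact (Complex.continuous_ofReal.comp continuous_fst).mul
      (((Complex.continuous_ofReal.comp (Real.continuous_cos.comp continuous_snd))).add
        ((Complex.continuous_ofReal.comp (Real.continuous_sin.comp continuous_snd)).mul
          continuous_const))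
  have habs : ∀ p : ℝ × ℝ, ‖(Complex.polarCoord.symm p : ℂ)‖ = |p.1| := by
    intro p
    rw [Complex.norm_polarCoord_symm]
  have hpre : MeasurableSet ((fun p : ℝ × ℝ => (Complex.polarCoord.symm p : ℂ)) ⁻¹' A) :=
    hsymm_cont.measurable hAmeas
  have h1 : ∀ p : ℝ × ℝ, p.1 • g (Complex.polarCoord.symm p)
      = ((fun p : ℝ × ℝ => (Complex.polarCoord.symm p : ℂ)) ⁻¹' A).indicator
          (fun p : ℝ × ℝ => p.1 * ‖f (Complex.polarCoord.symm p)‖) p := by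
    intro p
    by_cases hp : (Complex.polarCoord.symm p : ℂ) ∈ A
    · rw [hg, Set.indicator_of_mem hp, Set.indicator_of_mem (by exact hp)]
      simp [smul_eq_mul]
    · rw [hg, Set.indicator_of_notMem hp, Set.indicator_of_notMem (by exact hp)]
      simp
  have hLHS : (∫ p in Complex.polarCoord.target, p.1 • g (Complex.polarCoord.symm p))
      = ∫ p in Complex.polarCoord.target ∩
          ((fun p : ℝ × ℝ => (Complex.polarCoord.symm p : ℂ)) ⁻¹' A),
          p.1 * ‖f (Complex.polarCoord.symm p)‖ := by
    rw [← setIntegral_indicator hpre]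
    apply setIntegral_congr_fun (Complex.polarCoord.open_target.measurableSet)
    intro p _
    exact h1 p
  have hset : Complex.polarCoord.target ∩
      ((fun p : ℝ × ℝ => (Complex.polarCoord.symm p : ℂ)) ⁻¹' A)
      = Ioc R₁ R₂ ×ˢ Ioo (-π) π := by
    rw [Complex.polarCoord_target]
    ext ⟨r, θ⟩
    simp only [Set.mem_inter_iff, Set.mem_prod, Set.mem_Ioi, Set.mem_Ioo, Set.mem_preimage,
      hAdef, Set.mem_setOf_eq, habs, Set.mem_Ioc]
    constructor
    · rintro ⟨⟨hr0, hθ⟩, hra, hrb⟩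
      rw [abs_of_pos hr0] at hra hrb
      exact ⟨⟨hra, hrb⟩, hθ⟩
    · rintro ⟨⟨hra, hrb⟩, hθ⟩
      have hr0 : 0 < r := lt_trans h0 hra
      rw [abs_of_pos hr0]
      exact ⟨⟨hr0, hθ⟩, hra, hrb⟩
  have hae : (Ioc R₁ R₂ ×ˢ Ioo (-π) π : Set (ℝ × ℝ)) =ᵐ[volume] Ioc R₁ R₂ ×ˢ Ioc (-π) π := by
    apply ae_eq_set.2
    constructor
    · apply measure_mono_null (t := (∅ : Set (ℝ × ℝ)))
      · intro x hx
        rcases hx with ⟨⟨hx1, hx2⟩, hx3⟩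
        exact absurd ⟨hx1, Ioo_subset_Ioc_self hx2⟩ hx3
      · exact measure_empty
    · apply measure_mono_null (t := (Set.univ ×ˢ {π} : Set (ℝ × ℝ)))
      · rintro ⟨r, θ⟩ ⟨⟨hr, hθ⟩, hn⟩
        refine ⟨trivial, ?_⟩
        simp only [Set.mem_singleton_iff]
        by_contra hne
        exact hn ⟨hr, hθ.1, lt_of_le_of_ne hθ.2 hne⟩
      · rw [Measure.volume_eq_prod, Measure.prod_prod]
        simp
  have hIcongr : (∫ p in (Ioc R₁ R₂ ×ˢ Ioo (-π) π : Set (ℝ × ℝ)),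
        p.1 * ‖f (Complex.polarCoord.symm p)‖)
      = ∫ p in (Ioc R₁ R₂ ×ˢ Ioc (-π) π : Set (ℝ × ℝ)),
        p.1 * ‖f (Complex.polarCoord.symm p)‖ := setIntegral_congr_set hae
  have hfuneq : ∀ p : ℝ × ℝ, (Complex.polarCoord.symm p : ℂ) = circleMap 0 p.1 p.2 := by
    intro p
    simp [circleMap, Complex.polarCoord_symm_apply, Complex.exp_mul_I,
      ← Complex.ofReal_cos, ← Complex.ofReal_sin]
  calc (∫ q in Ioc R₁ R₂ ×ˢ Ioc (-π) π, q.1 * ‖f (circleMap 0 q.1 q.2)‖)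
      = ∫ p in (Ioc R₁ R₂ ×ˢ Ioc (-π) π : Set (ℝ × ℝ)),
          p.1 * ‖f (Complex.polarCoord.symm p)‖ := by
        apply setIntegral_congr_fun (measurableSet_Ioc.prod measurableSet_Ioc)
        intro p _
        simp only [hfuneq p]
    _ = ∫ p in (Ioc R₁ R₂ ×ˢ Ioo (-π) π : Set (ℝ × ℝ)),
          p.1 * ‖f (Complex.polarCoord.symm p)‖ := hIcongr.symm
    _ = ∫ p in Complex.polarCoord.target, p.1 • g (Complex.polarCoord.symm p) := by
        rw [hLHS, hset]
    _ = ∫ z, g z := key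
    _ = ∫ z in A, ‖f z‖ := hRHS

lemma St19_cauchy_bound {f : ℂ → ℂ} (hf : AnalyticOn ℂ f (ball 0 1))
    {R R₁ R₂ : ℝ} (hR0 : 0 < R) (h1 : R < R₁) (h2 : R₁ < R₂) (h3 : R₂ < 1)
    {ζ : ℂ} (hζ : ‖ζ‖ ≤ R) :
    2 * π * (R₁ - R) * (R₂ - R₁) * ‖f ζ‖
      ≤ ∫ z in {w : ℂ | R₁ < ‖w‖ ∧ ‖w‖ ≤ R₂}, ‖f z‖ := by
  set F : ℝ × ℝ → ℝ := fun q => q.1 * ‖f (circleMap 0 q.1 q.2)‖ with hF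
  have hFc : ContinuousOn F (Icc R₁ R₂ ×ˢ Icc (-π) π) := by
    apply ContinuousOn.mul (continuous_fst.continuousOn)
    apply ContinuousOn.norm
    apply hf.continuousOn.comp
    · apply Continuous.continuousOn
      have : (fun q : ℝ × ℝ => circleMap 0 q.1 q.2)
          = fun q : ℝ × ℝ => (q.1 : ℂ) * Complex.exp (q.2 * Complex.I) := by
        funext q; simp [circleMap]
      rw [this]
      exact (Complex.continuous_ofReal.comp continuous_fst).mul
        (Complex.continuous_exp.comp
          ((Complex.continuous_ofReal.comp continuous_snd).mul continuous_const))
    · rintro ⟨ρ, θ⟩ ⟨hρ, hθ⟩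
      show circleMap 0 ρ θ ∈ ball (0:ℂ) 1
      rw [mem_ball_zero_iff]
      have : ‖circleMap 0 ρ θ‖ = |ρ| := by
        rw [norm_circleMap_zero]
      rw [this, abs_of_pos (by cases hρ; linarith)]
      cases hρ; linarith
  have hFint : IntegrableOn F (Ioc R₁ R₂ ×ˢ Ioc (-π) π) volume := by
    apply IntegrableOn.mono_set
      (hFc.integrableOn_compact (isCompact_Icc.prod isCompact_Icc))
    exact Set.prod_mono Ioc_subset_Icc_self Ioc_subset_Icc_self
  have hrestrict : (volume : Measure (ℝ × ℝ)).restrict (Ioc R₁ R₂ ×ˢ Ioc (-π) π)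
      = (volume.restrict (Ioc R₁ R₂)).prod (volume.restrict (Ioc (-π) π)) := by
    rw [Measure.prod_restrict, ← Measure.volume_eq_prod]
  have hFint' : Integrable F ((volume.restrict (Ioc R₁ R₂)).prod (volume.restrict (Ioc (-π) π))) := by
    rw [← hrestrict]; exact hFint
  have hFub : (∫ q in Ioc R₁ R₂ ×ˢ Ioc (-π) π, F q)
      = ∫ ρ in Ioc R₁ R₂, ∫ θ in Ioc (-π) π, F (ρ, θ) := by
    rw [show (∫ q in Ioc R₁ R₂ ×ˢ Ioc (-π) π, F q)
        = ∫ q, F q ∂((volume.restrict (Ioc R₁ R₂)).prod (volume.restrict (Ioc (-π) π)))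
        from by rw [← hrestrict]]
    exact integral_prod F hFint'
  have hm_int : IntegrableOn (fun ρ => ∫ θ in Ioc (-π) π, F (ρ, θ)) (Ioc R₁ R₂) volume :=
    hFint'.integral_prod_left
  have hmono : ∀ ρ ∈ Ioc R₁ R₂,
      2 * π * (R₁ - R) * ‖f ζ‖ ≤ ∫ θ in Ioc (-π) π, F (ρ, θ) := by
    intro ρ hρ
    have := St19_circle_bound hf hR0 h1 h2 h3 hζ hρ.1.le hρ.2
    rwa [intervalIntegral.integral_of_le (by linarith [Real.pi_pos] : -π ≤ π)] at this
  have hstep : (2 * π * (R₁ - R) * ‖f ζ‖) * (R₂ - R₁) ≤ ∫ ρ in Ioc R₁ R₂, ∫ θ in Ioc (-π) π, F (ρ, θ) := by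
    have hconst : (∫ _ρ in Ioc R₁ R₂, (2 * π * (R₁ - R) * ‖f ζ‖)) 
        = (2 * π * (R₁ - R) * ‖f ζ‖) * (R₂ - R₁) := by
      rw [setIntegral_const, measureReal_def, Real.volume_Ioc, ENNReal.toReal_ofReal (by linarith), smul_eq_mul]
      ring
    rw [← hconst]
    apply setIntegral_mono_on (integrableOn_const (by rw [Real.volume_Ioc]; exact ENNReal.ofReal_ne_top)) hm_int measurableSet_Ioc hmono
  calc 2 * π * (R₁ - R) * (R₂ - R₁) * ‖f ζ‖
      = (2 * π * (R₁ - R) * ‖f ζ‖) * (R₂ - R₁) := by ring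
    _ ≤ ∫ ρ in Ioc R₁ R₂, ∫ θ in Ioc (-π) π, F (ρ, θ) := hstep
    _ = ∫ q in Ioc R₁ R₂ ×ˢ Ioc (-π) π, F q := hFub.symm
    _ = ∫ z in {w : ℂ | R₁ < ‖w‖ ∧ ‖w‖ ≤ R₂}, ‖f z‖ :=
        St19_polar hf.continuousOn (by linarith) h2 h3
/-- The key mass-on-annulus lemma. -/
lemma St19_annulus_mass {α p : ℝ} (hα : -1 < α) (hp : 1 ≤ p) {R : ℝ}
    (hR0 : 0 < R) (hR1 : R < 1) :
    ∃ κ : ℝ≥0∞, κ ≠ ∞ ∧ ∀ f : ℂ → ℂ, AnalyticOn ℂ f (ball 0 1) →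
      St19J α p (ball 0 1) f ≤ κ * St19J α p (ball 0 1 \ closedBall 0 R) f := by
  have hp0 : (0:ℝ) < p := by linarith
  set R₁ : ℝ := R + (1-R)/4 with hR₁def
  set R₂ : ℝ := R + (1-R)/2 with hR₂def
  have h1 : R < R₁ := by rw [hR₁def]; linarith
  have h2 : R₁ < R₂ := by rw [hR₁def, hR₂def]; linarith
  have h3 : R₂ < 1 := by rw [hR₂def]; linarith
  have hR₁0 : 0 < R₁ := by linarith
  set A : Set ℂ := {w : ℂ | R₁ < ‖w‖ ∧ ‖w‖ ≤ R₂} with hAdef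
  have hAmeas : MeasurableSet A := by
    have : A = (fun w : ℂ => ‖w‖) ⁻¹' Ioc R₁ R₂ := rfl
    rw [this]; exact measurable_norm measurableSet_Ioc
  have hAsub : A ⊆ closedBall (0:ℂ) R₂ := by
    intro z hz; rw [mem_closedBall_zero_iff]; exact hz.2
  have hAsubAnn : A ⊆ ball (0:ℂ) 1 \ closedBall 0 R := by
    intro z hz
    constructor
    · rw [mem_ball_zero_iff]; exact lt_of_le_of_lt hz.2 h3
    · rw [mem_closedBall_zero_iff]; push_neg; exact lt_trans h1 hz.1
  set cπ : ℝ := (1 + α) / Real.pi with hcπ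
  have hcπ0 : 0 < cπ := div_pos (by linarith) Real.pi_pos
  set c₀ : ℝ := 2 * π * (R₁ - R) * (R₂ - R₁) with hc₀
  have hc₀0 : 0 < c₀ := by
    apply mul_pos (mul_pos (by positivity) (by linarith)) (by linarith)
  set wmin : ℝ := cπ * min ((1 - R₂^2) ^ α) ((1 - R₁^2) ^ α) with hwmin
  have hwmin0 : 0 < wmin := by
    apply mul_pos hcπ0
    apply lt_min
    · exact Real.rpow_pos_of_pos (by nlinarith) _
    · exact Real.rpow_pos_of_pos (by nlinarith) _
  set wmax : ℝ := cπ * max 1 ((1 - R^2) ^ α) with hwmax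
  have hwmax0 : 0 ≤ wmax := by
    apply mul_nonneg hcπ0.le
    exact le_trans zero_le_one (le_max_left _ _)
  -- weight bounds
  have hwub : ∀ z ∈ closedBall (0:ℂ) R, St19bw α z ≤ ENNReal.ofReal wmax := by
    intro z hz
    rw [mem_closedBall_zero_iff] at hz
    apply ENNReal.ofReal_le_ofReal
    unfold St19w
    rw [hwmax]
    apply mul_le_mul_of_nonneg_left _ hcπ0.le
    have ht0 : 0 < 1 - R^2 := by nlinarith
    have htz : 1 - R^2 ≤ 1 - ‖z‖^2 := by nlinarith [norm_nonneg z]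
    have htz1 : 1 - ‖z‖^2 ≤ 1 := by nlinarith [norm_nonneg z]
    rcases le_or_gt 0 α with hα0 | hα0
    · exact le_trans (Real.rpow_le_one (by nlinarith) htz1 hα0) (le_max_left _ _)
    · exact le_trans (Real.rpow_le_rpow_of_nonpos ht0 htz hα0.le) (le_max_right _ _)
  have hwlb : ∀ z ∈ A, ENNReal.ofReal wmin ≤ St19bw α z := by
    intro z hz
    obtain ⟨hz1, hz2⟩ := hz
    apply ENNReal.ofReal_le_ofReal
    unfold St19w
    rw [hwmin]
    apply mul_le_mul_of_nonneg_left _ hcπ0.le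
    have ht0 : 0 < 1 - R₂^2 := by nlinarith
    have htl : 1 - R₂^2 ≤ 1 - ‖z‖^2 := by nlinarith
    have htu : 1 - ‖z‖^2 ≤ 1 - R₁^2 := by nlinarith
    rcases le_or_gt 0 α with hα0 | hα0
    · exact le_trans (min_le_left _ _) (Real.rpow_le_rpow ht0.le htl hα0)
    · refine le_trans (min_le_right _ _) ?_
      apply Real.rpow_le_rpow_of_nonpos (by nlinarith) htu hα0.le
  -- the constant
  set V : ℝ≥0∞ := volume (closedBall (0:ℂ) R) with hV
  have hVfin : V ≠ ∞ := measure_closedBall_lt_top.ne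
  have hvolA : volume A ≠ ∞ :=
    (lt_of_le_of_lt (measure_mono hAsub) measure_closedBall_lt_top).ne
  set κ₀ : ℝ≥0∞ := ENNReal.ofReal (c₀⁻¹) ^ p * ENNReal.ofReal wmax * V
      * (ENNReal.ofReal wmin)⁻¹ * (volume A) ^ (p - 1) with hκ₀
  refine ⟨κ₀ + 1, ?_, ?_⟩
  · rw [hκ₀]
    apply ENNReal.add_ne_top.2
    constructor
    · apply ENNReal.mul_ne_top
      apply ENNReal.mul_ne_top
      apply ENNReal.mul_ne_top
      apply ENNReal.mul_ne_top
      · exact ENNReal.rpow_ne_top_of_nonneg hp0.le ENNReal.ofReal_ne_top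
      · exact ENNReal.ofReal_ne_top
      · exact hVfin
      · exact ENNReal.inv_ne_top.2 (by simp [ENNReal.ofReal_pos.2 hwmin0, (ENNReal.ofReal_pos.2 hwmin0).ne'])
      · exact ENNReal.rpow_ne_top_of_nonneg (by linarith) hvolA
    · exact ENNReal.one_ne_top
  intro f hf
  set Ann : Set ℂ := ball (0:ℂ) 1 \ closedBall 0 R with hAnn
  have hAnnMeas : MeasurableSet Ann := measurableSet_ball.diff measurableSet_closedBall
  -- split
  have hsplit : St19J α p (ball 0 1) f
      ≤ St19J α p (closedBall 0 R) f + St19J α p Ann f := by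
    unfold St19J
    refine le_trans (lintegral_mono_set ?_) (lintegral_union_le _ _ _)
    intro z hz
    by_cases h : z ∈ closedBall (0:ℂ) R
    · exact Or.inl h
    · exact Or.inr ⟨hz, h⟩
  -- sup bound
  set Aint : ℝ := ∫ z in A, ‖f z‖ with hAint
  have hAint0 : 0 ≤ Aint := by
    apply setIntegral_nonneg hAmeas
    intro z _; exact norm_nonneg _
  have hsup : ∀ z ∈ closedBall (0:ℂ) R, ‖f z‖ ≤ c₀⁻¹ * Aint := by
    intro z hz
    rw [mem_closedBall_zero_iff] at hz
    have := St19_cauchy_bound hf hR0 h1 h2 h3 hz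
    rw [← hc₀, ← hAdef, ← hAint] at this
    rw [show c₀⁻¹ * Aint = Aint / c₀ by ring]
    rw [le_div_iff₀ hc₀0]
    linarith
  -- integrable on A
  have hfiA : IntegrableOn f A volume := by
    apply IntegrableOn.mono_set _ hAsub
    apply ContinuousOn.integrableOn_compact (isCompact_closedBall _ _)
    exact hf.continuousOn.mono (closedBall_subset_ball h3)
  -- step 3: bound on closed ball part
  have hJcb : St19J α p (closedBall 0 R) f
      ≤ ENNReal.ofReal (c₀⁻¹ * Aint) ^ p * ENNReal.ofReal wmax * V := by
    unfold St19J
    calc (∫⁻ z in closedBall (0:ℂ) R, (‖f z‖₊ : ℝ≥0∞) ^ p * St19bw α z)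
        ≤ ∫⁻ _z in closedBall (0:ℂ) R,
            ENNReal.ofReal (c₀⁻¹ * Aint) ^ p * ENNReal.ofReal wmax := by
          apply setLIntegral_mono' measurableSet_closedBall
          intro z hz
          apply mul_le_mul'
          · apply ENNReal.rpow_le_rpow _ hp0.le
            rw [← ofReal_norm_eq_coe_nnnorm]
            exact ENNReal.ofReal_le_ofReal (hsup z hz)
          · exact hwub z hz
      _ = ENNReal.ofReal (c₀⁻¹ * Aint) ^ p * ENNReal.ofReal wmax * V := by
          rw [setLIntegral_const]
  -- step 4: Hölder on A
  have hmeasA_f : AEStronglyMeasurable f (volume.restrict A) :=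
    (hf.continuousOn.mono (fun z hz => lt_of_le_of_lt (mem_closedBall_zero_iff.1 (hAsub hz)) h3 |> fun h => mem_ball_zero_iff.2 h)).aestronglyMeasurable hAmeas
  have hHold : (∫⁻ z in A, (‖f z‖₊ : ℝ≥0∞))
      ≤ (∫⁻ z in A, (‖f z‖₊ : ℝ≥0∞) ^ p) ^ (1/p) * (volume A) ^ (1 - 1/p) := by
    have key := eLpNorm_le_eLpNorm_mul_rpow_measure_univ
      (p := 1) (q := ENNReal.ofReal p)
      (by simpa using ENNReal.one_le_ofReal.2 hp) hmeasA_f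
    rw [eLpNorm_one_eq_lintegral_enorm] at key
    rw [eLpNorm_eq_lintegral_rpow_enorm_toReal (by simp [ENNReal.ofReal_eq_zero]; linarith)
      (by simp)] at key
    rw [ENNReal.toReal_ofReal hp0.le] at key
    simpa [Measure.restrict_apply_univ, enorm_eq_nnnorm] using key
  -- step 5: weight lower bound
  have hWlow : (∫⁻ z in A, (‖f z‖₊ : ℝ≥0∞) ^ p)
      ≤ (ENNReal.ofReal wmin)⁻¹ * St19J α p Ann f := by
    have h5 : ENNReal.ofReal wmin * (∫⁻ z in A, (‖f z‖₊ : ℝ≥0∞) ^ p)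
        ≤ St19J α p Ann f := by
      calc ENNReal.ofReal wmin * ∫⁻ z in A, (‖f z‖₊ : ℝ≥0∞) ^ p
          = ∫⁻ z in A, ENNReal.ofReal wmin * (‖f z‖₊ : ℝ≥0∞) ^ p := by
            rw [lintegral_const_mul' _ _ ENNReal.ofReal_ne_top]
        _ ≤ ∫⁻ z in A, (‖f z‖₊ : ℝ≥0∞) ^ p * St19bw α z := by
            apply setLIntegral_mono' hAmeas
            intro z hz
            rw [mul_comm]
            exact mul_le_mul_right (hwlb z hz) _
        _ ≤ St19J α p Ann f := by
            unfold St19J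
            exact lintegral_mono_set hAsubAnn
    have hne0 : ENNReal.ofReal wmin ≠ 0 := (ENNReal.ofReal_pos.2 hwmin0).ne'
    calc (∫⁻ z in A, (‖f z‖₊ : ℝ≥0∞) ^ p)
        = (ENNReal.ofReal wmin)⁻¹ * (ENNReal.ofReal wmin * ∫⁻ z in A, (‖f z‖₊ : ℝ≥0∞) ^ p) := by
          rw [← mul_assoc, ENNReal.inv_mul_cancel hne0 ENNReal.ofReal_ne_top, one_mul]
      _ ≤ (ENNReal.ofReal wmin)⁻¹ * St19J α p Ann f := mul_le_mul_right h5 _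
  -- step 6: combine
  have hAint_lint : ENNReal.ofReal Aint = ∫⁻ z in A, (‖f z‖₊ : ℝ≥0∞) :=
    ofReal_integral_norm_eq_lintegral_enorm hfiA
  have hAp : ENNReal.ofReal Aint ^ p
      ≤ ((ENNReal.ofReal wmin)⁻¹ * St19J α p Ann f) * (volume A) ^ (p - 1) := by
    calc ENNReal.ofReal Aint ^ p
        ≤ ((∫⁻ z in A, (‖f z‖₊ : ℝ≥0∞) ^ p) ^ (1/p) * (volume A) ^ (1 - 1/p)) ^ p := by
          apply ENNReal.rpow_le_rpow _ hp0.le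
          rw [hAint_lint]
          exact hHold
      _ = (∫⁻ z in A, (‖f z‖₊ : ℝ≥0∞) ^ p) ^ ((1/p) * p) * (volume A) ^ ((1 - 1/p) * p) := by
          rw [ENNReal.mul_rpow_of_nonneg _ _ hp0.le, ← ENNReal.rpow_mul, ← ENNReal.rpow_mul]
      _ = (∫⁻ z in A, (‖f z‖₊ : ℝ≥0∞) ^ p) * (volume A) ^ (p - 1) := by
          rw [show (1/p) * p = 1 by field_simp, show (1 - 1/p) * p = p - 1 by field_simp,
            ENNReal.rpow_one]
      _ ≤ ((ENNReal.ofReal wmin)⁻¹ * St19J α p Ann f) * (volume A) ^ (p - 1) := by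
          exact mul_le_mul_left hWlow _
  have hmain : St19J α p (ball 0 1) f ≤ (κ₀ + 1) * St19J α p Ann f := by
    calc St19J α p (ball 0 1) f
        ≤ St19J α p (closedBall 0 R) f + St19J α p Ann f := hsplit
      _ ≤ ENNReal.ofReal (c₀⁻¹ * Aint) ^ p * ENNReal.ofReal wmax * V + St19J α p Ann f := by
          exact add_le_add_left hJcb _
      _ ≤ κ₀ * St19J α p Ann f + St19J α p Ann f := by
          apply add_le_add_left
          rw [ENNReal.ofReal_mul (by positivity), ENNReal.mul_rpow_of_nonneg _ _ hp0.le]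
          calc ENNReal.ofReal c₀⁻¹ ^ p * ENNReal.ofReal Aint ^ p * ENNReal.ofReal wmax * V
              ≤ ENNReal.ofReal c₀⁻¹ ^ p *
                  (((ENNReal.ofReal wmin)⁻¹ * St19J α p Ann f) * (volume A) ^ (p - 1))
                  * ENNReal.ofReal wmax * V := by
                gcongr
            _ = κ₀ * St19J α p Ann f := by
                rw [hκ₀]; ring
      _ = (κ₀ + 1) * St19J α p Ann f := by ring
  exact hmain

lemma St19_blaschke_id (a z : ℂ) :
    ‖1 - (starRingEnd ℂ) a * z‖^2 - ‖a - z‖^2 = (1 - ‖a‖^2) * (1 - ‖z‖^2) := by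
  simp only [Complex.sq_norm]
  rw [Complex.normSq_sub, Complex.normSq_sub, Complex.normSq_mul, Complex.normSq_conj,
    Complex.normSq_one]
  have h1 : (1 * (starRingEnd ℂ) ((starRingEnd ℂ) a * z)).re = (a * (starRingEnd ℂ) z).re := by
    rw [one_mul, map_mul, Complex.conj_conj]
  rw [h1]
  ring

lemma St19_denom_lb {a z : ℂ} (ha : ‖a‖ < 1) (hz : ‖z‖ < 1) :
    1 - ‖a‖ ≤ ‖1 - (starRingEnd ℂ) a * z‖ ∧ (0:ℝ) < 1 - ‖a‖ := by
  constructor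
  · have h := norm_sub_norm_le (1 : ℂ) ((starRingEnd ℂ) a * z)
    have h2 : ‖(starRingEnd ℂ) a * z‖ ≤ ‖a‖ := by
      rw [norm_mul, RCLike.norm_conj]
      calc ‖a‖ * ‖z‖ ≤ ‖a‖ * 1 := by
            exact mul_le_mul_of_nonneg_left hz.le (norm_nonneg a)
        _ = ‖a‖ := mul_one _
    simp only [norm_one] at h
    linarith
  · linarith

lemma St19_blaschke_le_one {a z : ℂ} (ha : ‖a‖ < 1) (hz : ‖z‖ < 1) :
    ‖(a - z) / (1 - (starRingEnd ℂ) a * z)‖ ≤ 1 := by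
  obtain ⟨hd, hd0⟩ := St19_denom_lb ha hz
  have hdpos : 0 < ‖1 - (starRingEnd ℂ) a * z‖ := lt_of_lt_of_le hd0 hd
  rw [norm_div, div_le_one hdpos]
  have hid := St19_blaschke_id a z
  have hrhs : 0 ≤ (1 - ‖a‖^2) * (1 - ‖z‖^2) := by
    apply mul_nonneg <;> nlinarith [norm_nonneg a, norm_nonneg z]
  have hsq : ‖a - z‖^2 ≤ ‖1 - (starRingEnd ℂ) a * z‖^2 := by linarith
  exact (pow_le_pow_iff_left₀ (norm_nonneg _) (norm_nonneg _) two_ne_zero).1 hsq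

lemma St19_blaschke_lb {a z : ℂ} (ha : ‖a‖ < 1) (hz : ‖z‖ < 1) {t : ℝ} (ht : 0 ≤ t)
    (hq : (1 + ‖a‖) / (1 - ‖a‖) * (1 - ‖z‖^2) ≤ 1 - t^2) :
    t ≤ ‖(a - z) / (1 - (starRingEnd ℂ) a * z)‖ := by
  obtain ⟨hd, hd0⟩ := St19_denom_lb ha hz
  have hdpos : 0 < ‖1 - (starRingEnd ℂ) a * z‖ := lt_of_lt_of_le hd0 hd
  set d := ‖1 - (starRingEnd ℂ) a * z‖ with hddef
  set n := ‖a - z‖ with hndef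
  have hid := St19_blaschke_id a z
  set A := ‖a‖
  set Z := ‖z‖
  have hZ0 : 0 ≤ Z := norm_nonneg _
  have hZ2 : 0 ≤ 1 - Z^2 := by nlinarith
  set r := (1 + A) / (1 - A) with hr
  have hr0 : 0 ≤ r := div_nonneg (by positivity) hd0.le
  have hkey : r * (1 - A)^2 = (1 - A^2) := by
    rw [hr]
    field_simp
    ring
  have hd2 : (1 - A)^2 ≤ d^2 := by
    apply pow_le_pow_left₀ hd0.le hd
  -- n^2 ≥ d^2 * (1 - r (1-Z^2)) ≥ d^2 t^2
  have h5 : (1 - A^2) * (1 - Z^2) ≤ r * (1 - Z^2) * d^2 := by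
    calc (1 - A^2) * (1 - Z^2) = r * (1 - Z^2) * (1 - A)^2 := by rw [← hkey]; ring
      _ ≤ r * (1 - Z^2) * d^2 := by
          apply mul_le_mul_of_nonneg_left hd2 (by positivity)
  have h6 : d^2 * t^2 ≤ n^2 := by
    have h7 : n^2 = d^2 - (1 - A^2) * (1 - Z^2) := by linarith
    have h8 : t^2 ≤ 1 - r * (1 - Z^2) := by linarith
    nlinarith [sq_nonneg d, sq_nonneg t, hdpos]
  have h9 : (t * d)^2 ≤ n^2 := by nlinarith
  have h10 : t * d ≤ n :=
    (pow_le_pow_iff_left₀ (by positivity) (norm_nonneg _) two_ne_zero).1 h9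
  rw [norm_div, ← hndef, ← hddef, le_div_iff₀ hdpos]
  exact h10

/-- Lower bound for a finite Blaschke product on an annulus. -/
lemma St19_tau_annulus (N : ℕ) (cb : ℂ) (hcb : ‖cb‖ = 1) (a : Fin N → ℂ)
    (ha : ∀ k, ‖a k‖ < 1) (τ : ℂ → ℂ)
    (hτ : τ = fun z => cb * ∏ k, (a k - z) / (1 - (starRingEnd ℂ) (a k) * z))
    {s : ℝ} (hs0 : 0 < s) (hs1 : s < 1) :
    ∃ R : ℝ, 0 < R ∧ R < 1 ∧ ∀ z : ℂ, R < ‖z‖ → ‖z‖ < 1 → s ≤ ‖τ z‖ := by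
  have hτn : ∀ z, ‖τ z‖ = ∏ k, ‖(a k - z) / (1 - (starRingEnd ℂ) (a k) * z)‖ := by
    intro z
    rw [hτ]
    simp only [norm_mul, hcb, one_mul, norm_prod]
  rcases Nat.eq_zero_or_pos N with hN | hN
  · refine ⟨1/2, by norm_num, by norm_num, ?_⟩
    intro z _ _
    rw [hτn z]
    subst hN
    simp [hs1.le]
  -- N ≥ 1
  set t : ℝ := s ^ ((N:ℝ)⁻¹) with htdef
  have hNR : (0:ℝ) < N := by exact_mod_cast hN
  have ht0 : 0 < t := Real.rpow_pos_of_pos hs0 _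
  have ht1 : t < 1 := Real.rpow_lt_one hs0.le hs1 (by positivity)
  have htN : t ^ N = s := by
    rw [htdef, ← Real.rpow_natCast (s ^ ((N:ℝ)⁻¹)) N, ← Real.rpow_mul hs0.le,
      inv_mul_cancel₀ hNR.ne', Real.rpow_one]
  set C : ℝ := (∑ k, (1 + ‖a k‖) / (1 - ‖a k‖)) + 1 with hC
  have hterm : ∀ k, 0 ≤ (1 + ‖a k‖) / (1 - ‖a k‖) := by
    intro k
    apply div_nonneg (by positivity)
    have := ha k; linarith
  have hCpos : 0 < C := by
    rw [hC]
    have : 0 ≤ ∑ k, (1 + ‖a k‖) / (1 - ‖a k‖) := Finset.sum_nonneg (fun k _ => hterm k)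
    linarith
  have hCk : ∀ k, (1 + ‖a k‖) / (1 - ‖a k‖) ≤ C := by
    intro k
    rw [hC]
    have := Finset.single_le_sum (f := fun k => (1 + ‖a k‖) / (1 - ‖a k‖))
      (fun k _ => hterm k) (Finset.mem_univ k)
    linarith
  set ε : ℝ := (1 - t^2) / C with hε
  have hε0 : 0 < ε := by
    apply div_pos _ hCpos
    nlinarith
  refine ⟨max (Real.sqrt (1 - ε)) (1/2), by positivity, ?_, ?_⟩
  · apply max_lt _ (by norm_num)
    apply (Real.sqrt_lt' one_pos).2
    nlinarith
  intro z hzR hz1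
  have hz2 : 1 - ‖z‖^2 < ε := by
    have h1 : Real.sqrt (1 - ε) < ‖z‖ := lt_of_le_of_lt (le_max_left _ _) hzR
    have h2 : (1:ℝ)/2 < ‖z‖ := lt_of_le_of_lt (le_max_right _ _) hzR
    rcases le_or_gt (1 - ε) 0 with h | h
    · nlinarith
    · have h3 : Real.sqrt (1 - ε) ^ 2 = 1 - ε := Real.sq_sqrt h.le
      have h4 : Real.sqrt (1 - ε) ^ 2 < ‖z‖^2 := by
        apply pow_lt_pow_left₀ h1 (Real.sqrt_nonneg _) two_ne_zero
      nlinarith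
  have hfac : ∀ k : Fin N, t ≤ ‖(a k - z) / (1 - (starRingEnd ℂ) (a k) * z)‖ := by
    intro k
    apply St19_blaschke_lb (ha k) hz1 ht0.le
    calc (1 + ‖a k‖) / (1 - ‖a k‖) * (1 - ‖z‖^2)
        ≤ C * (1 - ‖z‖^2) := by
          apply mul_le_mul_of_nonneg_right (hCk k)
          nlinarith [norm_nonneg z]
      _ ≤ C * ε := by
          apply mul_le_mul_of_nonneg_left hz2.le hCpos.le
      _ = 1 - t^2 := by
          rw [hε]
          field_simp
  calc s = t ^ N := htN.symm
    _ = ∏ _k : Fin N, t := by rw [Finset.prod_const, Finset.card_univ, Fintype.card_fin]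
    _ ≤ ∏ k, ‖(a k - z) / (1 - (starRingEnd ℂ) (a k) * z)‖ :=
        Finset.prod_le_prod (fun k _ => ht0.le) (fun k _ => hfac k)
    _ = ‖τ z‖ := (hτn z).symm

lemma St19_tau_le_one (N : ℕ) (cb : ℂ) (hcb : ‖cb‖ = 1) (a : Fin N → ℂ)
    (ha : ∀ k, ‖a k‖ < 1) (τ : ℂ → ℂ)
    (hτ : τ = fun z => cb * ∏ k, (a k - z) / (1 - (starRingEnd ℂ) (a k) * z))
    {z : ℂ} (hz : ‖z‖ < 1) : ‖τ z‖ ≤ 1 := by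
  rw [hτ]
  simp only [norm_mul, hcb, one_mul, norm_prod]
  apply Finset.prod_le_one (fun k _ => norm_nonneg _)
  exact fun k _ => St19_blaschke_le_one (ha k) hz

lemma St19_prod_block (v : ℂ → ℂ) (η : ℂ) (m n₀ : ℕ) (z : ℂ) :
    ∏ j ∈ Finset.range (m * n₀), v (η ^ j * z)
      = ∏ i ∈ Finset.range m, (∏ l ∈ Finset.range n₀, v (η ^ l * (η ^ (i * n₀) * z))) := by
  induction m with
  | zero => simp
  | succ m ih =>
    rw [Finset.prod_range_succ, ← ih, Nat.succ_mul, Finset.prod_range_add]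
    congr 1
    apply Finset.prod_congr rfl
    intro l _
    rw [← mul_assoc, ← pow_add, Nat.add_comm]

lemma St19_telescope (ψ f : ℂ → ℂ) (η lam : ℂ) (n : ℕ) (z : ℂ) :
    (∏ j ∈ Finset.range n, ψ (η ^ j * z)) * f (η ^ n * z) - lam ^ n * f z
      = ∑ k ∈ Finset.range n, lam ^ (n - 1 - k) *
          ((∏ j ∈ Finset.range k, ψ (η ^ j * z)) *
            (ψ (η ^ k * z) * f (η * (η ^ k * z)) - lam * f (η ^ k * z))) := by
  induction n with
  | zero => simp
  | succ n ih =>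
    rw [Finset.sum_range_succ]
    have hlast : n + 1 - 1 - n = 0 := by omega
    rw [hlast, pow_zero, one_mul]
    have hsum : (∑ k ∈ Finset.range n, lam ^ (n + 1 - 1 - k) *
          ((∏ j ∈ Finset.range k, ψ (η ^ j * z)) *
            (ψ (η ^ k * z) * f (η * (η ^ k * z)) - lam * f (η ^ k * z))))
        = lam * ∑ k ∈ Finset.range n, lam ^ (n - 1 - k) *
          ((∏ j ∈ Finset.range k, ψ (η ^ j * z)) *
            (ψ (η ^ k * z) * f (η * (η ^ k * z)) - lam * f (η ^ k * z))) := by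
      rw [Finset.mul_sum]
      apply Finset.sum_congr rfl
      intro k hk
      have hk' : k < n := Finset.mem_range.1 hk
      have : n + 1 - 1 - k = (n - 1 - k) + 1 := by omega
      rw [this, pow_succ]
      ring
    rw [hsum, ← ih, Finset.prod_range_succ]
    have hη : η * (η ^ n * z) = η ^ (n+1) * z := by
      rw [← mul_assoc, ← pow_succ']
    rw [hη]
    ring

lemma St19_bergNorm_nonneg {α : ℝ} (p : ℝ) (hα : -1 < α) (f : ℂ → ℂ) :
    0 ≤ bergNorm α p f := by
  apply Real.rpow_nonneg
  apply setIntegral_nonneg measurableSet_ball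
  intro z hz
  exact mul_nonneg (Real.rpow_nonneg (norm_nonneg _) _)
    (St19w_nonneg hα (mem_ball_zero_iff.1 hz))

lemma St19_bergNorm_eq_nB {α p : ℝ} (hα : -1 < α) (hp : 1 ≤ p) {f : ℂ → ℂ}
    (hf : ContinuousOn f (ball 0 1)) :
    bergNorm α p f = (St19nB α p f).toReal := by
  rw [St19_bridge α p hα hp f hf, St19nB, ENNReal.toReal_rpow]

lemma St19nB_congr {α p : ℝ} {f g : ℂ → ℂ} (h : ∀ z ∈ ball (0:ℂ) 1, f z = g z) :
    St19nB α p f = St19nB α p g := by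
  unfold St19nB
  rw [St19J_congr measurableSet_ball h]

lemma St19nB_rot {α p : ℝ} (c : ℂ) (hc : ‖c‖ = 1) (u : ℂ → ℂ) :
    St19nB α p (fun z => u (c * z)) = St19nB α p u := by
  unfold St19nB
  rw [St19J_rot c hc measurableSet_ball (fun z => by
    constructor
    · intro h
      rw [mem_ball_zero_iff] at h ⊢
      rwa [norm_mul, hc, one_mul] at h
    · intro h
      rw [mem_ball_zero_iff] at h ⊢
      rwa [norm_mul, hc, one_mul]) u]

lemma St19nB_zero {α p : ℝ} (hp : 1 ≤ p) : St19nB α p (fun _ => 0) = 0 := by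
  unfold St19nB St19J
  have : ∀ z : ℂ, (‖(0:ℂ)‖₊ : ℝ≥0∞) ^ p * St19bw α z = 0 := by
    intro z
    rw [nnnorm_zero, ENNReal.coe_zero, ENNReal.zero_rpow_of_pos (by linarith), zero_mul]
  simp only [this, lintegral_const, zero_mul]
  rw [ENNReal.zero_rpow_of_pos (by positivity)]

lemma St19nB_sum {α p : ℝ} (hp : 1 ≤ p) (n : ℕ) (F : ℕ → ℂ → ℂ)
    (hF : ∀ k, ContinuousOn (F k) (ball 0 1)) :
    St19nB α p (fun z => ∑ k ∈ Finset.range n, F k z)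
      ≤ ∑ k ∈ Finset.range n, St19nB α p (F k) := by
  induction n with
  | zero =>
    simp only [Finset.range_zero, Finset.sum_empty]
    rw [St19nB_zero hp]
  | succ n ih =>
    have hpart : ContinuousOn (fun z => ∑ k ∈ Finset.range n, F k z) (ball (0:ℂ) 1) := by
      apply continuousOn_finset_sum
      intro k _
      exact hF k
    have heq : St19nB α p (fun z => ∑ k ∈ Finset.range (n+1), F k z)
        = St19nB α p (fun z => (∑ k ∈ Finset.range n, F k z) + F n z) := by
      apply St19nB_congr
      intro z _
      rw [Finset.sum_range_succ]
    rw [heq, Finset.sum_range_succ]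
    exact le_trans (St19nB_add hp hpart (hF n)) (add_le_add_left ih _)

lemma St19_analyticOn_prod {ι : Type*} (S : Finset ι) (F : ι → ℂ → ℂ) (s : Set ℂ)
    (hf : ∀ k, AnalyticOn ℂ (F k) s) : AnalyticOn ℂ (fun z => ∏ k ∈ S, F k z) s := by
  classical
  induction S using Finset.induction with
  | empty => simpa using analyticOn_const
  | insert a S hx ih =>
    simp only [Finset.prod_insert hx]
    exact (hf _).mul ih

/-- Let `φ(z) = ηz` be a rotation, `ψ = τ·v` with `τ` a finite
Blaschke product and `v, 1/v ∈ H^∞`. If `q > 0`, `n₀ ∈ ℕ` satisfy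
`q^{n₀} < inf_D |v_(n₀)|`, then for every `λ` with `|λ| < q` there are `n` and
`c > |λ|^n/2 > 0` with `‖C_{ψ,φ}^n f‖ ≥ c‖f‖` for all `f ∈ A^p_α`
(so `‖C^n f‖ ≥ c‖f‖ > |λ|^n ‖f‖/2` for `f ≠ 0`); in particular `C_{ψ,φ} - λ`
is bounded below on `A^p_α`. -/
theorem stmt_19 (α p : ℝ) (hα : -1 < α) (hp : 1 ≤ p)
    (η : ℂ) (hη : ‖η‖ = 1)
    (N : ℕ) (cb : ℂ) (hcb : ‖cb‖ = 1) (a : Fin N → ℂ) (ha : ∀ k, ‖a k‖ < 1)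
    (τ : ℂ → ℂ)
    (hτ : τ = fun z => cb * ∏ k, (a k - z) / (1 - (starRingEnd ℂ) (a k) * z))
    (v : ℂ → ℂ) (hvan : AnalyticOn ℂ v (ball 0 1))
    (hvbd : ∃ M, ∀ z ∈ ball (0:ℂ) 1, ‖v z‖ ≤ M)
    (hvinv : ∃ δ > (0:ℝ), ∀ z ∈ ball (0:ℂ) 1, δ ≤ ‖v z‖)
    (ψ : ℂ → ℂ) (hψ : ψ = fun z => τ z * v z)
    (q : ℝ) (hq : 0 < q) (n₀ : ℕ)
    (hqn : q ^ n₀ <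
      sInf ((fun z => ‖∏ j ∈ Finset.range n₀, v (η ^ j * z)‖) '' ball (0:ℂ) 1))
    (lam : ℂ) (hlam : ‖lam‖ < q) :
    (∃ n : ℕ, ∃ c : ℝ, 0 < c ∧ ‖lam‖ ^ n / 2 < c ∧
      ∀ f : ℂ → ℂ, MemBergman α p f →
        c * bergNorm α p f ≤
          bergNorm α p (fun z => (∏ j ∈ Finset.range n, ψ (η ^ j * z)) * f (η ^ n * z))) ∧
    (∃ d : ℝ, 0 < d ∧ ∀ f : ℂ → ℂ, MemBergman α p f →
      d * bergNorm α p f ≤ bergNorm α p (fun z => ψ z * f (η * z) - lam * f z)) := by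
  obtain ⟨M, hM⟩ := hvbd
  have hp0 : (0:ℝ) < p := by linarith
  constructor
  · -- PART 1 : take n = 0, c = 3/4
    refine ⟨0, 3/4, by norm_num, ?_, ?_⟩
    · simp only [pow_zero]; norm_num
    · intro f hfB
      have hEq : (fun z => (∏ j ∈ Finset.range 0, ψ (η ^ j * z)) * f (η ^ 0 * z)) = f := by
        funext z; simp
      rw [hEq]
      have h0 := St19_bergNorm_nonneg p hα f
      linarith
  · -- PART 2
    -- n₀ ≥ 1
    have hn₀ : 1 ≤ n₀ := by
      by_contra h
      push_neg at h
      have h0 : n₀ = 0 := by omega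
      subst h0
      simp only [pow_zero, Finset.range_zero, Finset.prod_empty, norm_one] at hqn
      rw [Set.Nonempty.image_const (Metric.nonempty_ball.2 one_pos) 1, csInf_singleton] at hqn
      exact absurd hqn (lt_irrefl 1)
    set b : ℝ := sInf ((fun z => ‖∏ j ∈ Finset.range n₀, v (η ^ j * z)‖) '' ball (0:ℂ) 1)
      with hbdef
    have hb : q ^ n₀ < b := hqn
    have hbpos : 0 < b := lt_trans (pow_pos hq n₀) hb
    have hblb : ∀ z ∈ ball (0:ℂ) 1, b ≤ ‖∏ j ∈ Finset.range n₀, v (η ^ j * z)‖ := by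
      intro z hz
      have hbdd : BddBelow ((fun z => ‖∏ j ∈ Finset.range n₀, v (η ^ j * z)‖) '' ball (0:ℂ) 1) := by
        refine ⟨0, ?_⟩
        rintro x ⟨w, _, rfl⟩
        exact norm_nonneg _
      exact csInf_le hbdd (Set.mem_image_of_mem _ hz)
    -- rotation facts
    have hnorm_rot : ∀ (j : ℕ) (z : ℂ), ‖η ^ j * z‖ = ‖z‖ := by
      intro j z; rw [norm_mul, norm_pow, hη, one_pow, one_mul]
    have hmem : ∀ (j : ℕ) (z : ℂ), z ∈ ball (0:ℂ) 1 → η ^ j * z ∈ ball (0:ℂ) 1 := by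
      intro j z hz
      rw [mem_ball_zero_iff, hnorm_rot]
      exact mem_ball_zero_iff.1 hz
    have hmaps : ∀ (j : ℕ), Set.MapsTo (fun z : ℂ => η ^ j * z) (ball (0:ℂ) 1) (ball (0:ℂ) 1) :=
      fun j z hz => hmem j z hz
    have hrot_an : ∀ (j : ℕ), AnalyticOn ℂ (fun z : ℂ => η ^ j * z) (ball 0 1) :=
      fun j => (analyticOn_const).mul (analyticOn_id)
    -- analyticity of τ, ψ
    have hτan : AnalyticOn ℂ τ (ball 0 1) := by
      rw [hτ]
      apply (analyticOn_const).mul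
      apply St19_analyticOn_prod
      intro k
      apply AnalyticOn.div
      · exact (analyticOn_const).sub (analyticOn_id)
      · exact (analyticOn_const).sub ((analyticOn_const).mul (analyticOn_id))
      · intro z hz
        rw [mem_ball_zero_iff] at hz
        obtain ⟨hd, hd0⟩ := St19_denom_lb (ha k) hz
        intro hzero
        rw [hzero] at hd
        simp only [norm_zero] at hd
        linarith
    have hψan : AnalyticOn ℂ ψ (ball 0 1) := by rw [hψ]; exact hτan.mul hvan
    -- bound for ψ
    have hM0 : 0 ≤ M := le_trans (norm_nonneg (v 0)) (hM 0 (by simp))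
    set Mψ : ℝ := max M 1 with hMψ
    have hMψ1 : 1 ≤ Mψ := le_max_right _ _
    have hMψ0 : 0 < Mψ := lt_of_lt_of_le one_pos hMψ1
    have hψM : ∀ z ∈ ball (0:ℂ) 1, ‖ψ z‖ ≤ Mψ := by
      intro z hz
      rw [hψ]
      simp only [norm_mul]
      have h1 : ‖τ z‖ ≤ 1 := St19_tau_le_one N cb hcb a ha τ hτ (mem_ball_zero_iff.1 hz)
      have h2 : ‖v z‖ ≤ M := hM z hz
      calc ‖τ z‖ * ‖v z‖ ≤ 1 * M := mul_le_mul h1 h2 (norm_nonneg _) one_pos.le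
        _ = M := one_mul M
        _ ≤ Mψ := le_max_left _ _
    have hψprod : ∀ (k : ℕ), ∀ z ∈ ball (0:ℂ) 1,
        ‖∏ j ∈ Finset.range k, ψ (η ^ j * z)‖ ≤ Mψ ^ k := by
      intro k z hz
      rw [norm_prod]
      calc ∏ j ∈ Finset.range k, ‖ψ (η ^ j * z)‖ ≤ ∏ _j ∈ Finset.range k, Mψ :=
            Finset.prod_le_prod (fun j _ => norm_nonneg _)
              (fun j _ => hψM _ (hmem j z hz))
        _ = Mψ ^ k := by rw [Finset.prod_const, Finset.card_range]
    -- choose s, γ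
    set r : ℝ := (q ^ n₀ / b + 1) / 2 with hrdef
    have hrlt : q ^ n₀ / b < 1 := (div_lt_one hbpos).2 hb
    have hr0 : 0 < r := by positivity
    have hr1 : r < 1 := by rw [hrdef]; linarith
    have hrgt : q ^ n₀ / b < r := by rw [hrdef]; linarith
    set s : ℝ := r ^ ((n₀:ℝ)⁻¹) with hsdef
    have hn₀R : (0:ℝ) < n₀ := by exact_mod_cast hn₀
    have hs0 : 0 < s := Real.rpow_pos_of_pos hr0 _
    have hs1 : s < 1 := Real.rpow_lt_one hr0.le hr1 (by positivity)
    have hsn : s ^ n₀ = r := by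
      rw [hsdef, ← Real.rpow_natCast (r ^ ((n₀:ℝ)⁻¹)) n₀, ← Real.rpow_mul hr0.le,
        inv_mul_cancel₀ hn₀R.ne', Real.rpow_one]
    set γ : ℝ := s ^ n₀ * b with hγdef
    have hγq : q ^ n₀ < γ := by
      rw [hγdef, hsn]
      rw [div_lt_iff₀ hbpos] at hrgt
      exact hrgt
    have hγ0 : 0 < γ := lt_trans (pow_pos hq n₀) hγq
    -- annulus radius and mass
    obtain ⟨R, hR0, hR1, hτlb⟩ := St19_tau_annulus N cb hcb a ha τ hτ hs0 hs1
    obtain ⟨κ, hκfin, hκ⟩ := St19_annulus_mass hα hp hR0 hR1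
    set K₀ : ℝ := (κ ^ p⁻¹).toReal + 1 with hK₀
    have hκrfin : κ ^ p⁻¹ ≠ ∞ := ENNReal.rpow_ne_top_of_nonneg (by positivity) hκfin
    have hK₀pos : 0 < K₀ := by positivity
    -- ratio and m
    set ρ : ℝ := ‖lam‖ ^ n₀ / γ with hρdef
    have hρ0 : 0 ≤ ρ := by positivity
    have hρ1 : ρ < 1 := by
      rw [hρdef, div_lt_one hγ0]
      calc ‖lam‖ ^ n₀ ≤ q ^ n₀ := pow_le_pow_left₀ (norm_nonneg _) hlam.le n₀
        _ < γ := hγq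
    obtain ⟨m₁, hm₁⟩ := exists_pow_lt_of_lt_one (show (0:ℝ) < 1 / (2 * K₀) by positivity) hρ1
    set m : ℕ := max m₁ 1 with hmdef
    have hm1 : 1 ≤ m := le_max_right _ _
    have hρm : ρ ^ m ≤ ρ ^ m₁ := pow_le_pow_of_le_one hρ0 hρ1.le (le_max_left _ _)
    have hmain_small : K₀ * ρ ^ m ≤ 1/2 := by
      calc K₀ * ρ ^ m ≤ K₀ * ρ ^ m₁ := mul_le_mul_of_nonneg_left hρm hK₀pos.le
        _ ≤ K₀ * (1/(2*K₀)) := mul_le_mul_of_nonneg_left hm₁.le hK₀pos.le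
        _ = 1/2 := by field_simp
    set n : ℕ := m * n₀ with hndef
    have hn1 : 1 ≤ n := by
      calc 1 = 1 * 1 := (one_mul 1).symm
        _ ≤ m * n₀ := Nat.mul_le_mul hm1 hn₀
    set c₁ : ℝ := γ ^ m with hc₁def
    have hc₁0 : 0 < c₁ := pow_pos hγ0 m
    have hc₁eq : c₁ = s ^ n * b ^ m := by
      rw [hc₁def, hγdef, hndef, mul_pow, ← pow_mul, Nat.mul_comm n₀ m]
    -- annulus set
    set Ann : Set ℂ := ball (0:ℂ) 1 \ closedBall 0 R with hAnnDef
    have hAnnMeas : MeasurableSet Ann := measurableSet_ball.diff measurableSet_closedBall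
    have hAnnInv : ∀ z : ℂ, η ^ n * z ∈ Ann ↔ z ∈ Ann := by
      intro z
      rw [hAnnDef]
      simp only [Set.mem_diff, mem_ball_zero_iff, mem_closedBall_zero_iff, hnorm_rot]
    have hηn : ‖η ^ n‖ = 1 := by rw [norm_pow, hη, one_pow]
    -- lower bound for the symbol product on the annulus
    have hψlow : ∀ z ∈ Ann, c₁ ≤ ‖∏ j ∈ Finset.range n, ψ (η ^ j * z)‖ := by
      intro z hz
      obtain ⟨hz1', hz2'⟩ := hz
      rw [mem_ball_zero_iff] at hz1'
      rw [mem_closedBall_zero_iff] at hz2'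
      push_neg at hz2'
      have hsplit : (∏ j ∈ Finset.range n, ψ (η ^ j * z))
          = (∏ j ∈ Finset.range n, τ (η ^ j * z)) * (∏ j ∈ Finset.range n, v (η ^ j * z)) := by
        rw [← Finset.prod_mul_distrib]
        apply Finset.prod_congr rfl
        intro j _
        rw [hψ]
      rw [hsplit, norm_mul]
      have hτpart : s ^ n ≤ ‖∏ j ∈ Finset.range n, τ (η ^ j * z)‖ := by
        rw [norm_prod]
        calc s ^ n = ∏ _j ∈ Finset.range n, s := by rw [Finset.prod_const, Finset.card_range]
          _ ≤ ∏ j ∈ Finset.range n, ‖τ (η ^ j * z)‖ :=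
              Finset.prod_le_prod (fun j _ => hs0.le)
                (fun j _ => hτlb _ (by rw [hnorm_rot]; exact hz2')
                  (by rw [hnorm_rot]; exact hz1'))
      have hvpart : b ^ m ≤ ‖∏ j ∈ Finset.range n, v (η ^ j * z)‖ := by
        rw [hndef, St19_prod_block, norm_prod]
        calc b ^ m = ∏ _i ∈ Finset.range m, b := by rw [Finset.prod_const, Finset.card_range]
          _ ≤ ∏ i ∈ Finset.range m, ‖∏ l ∈ Finset.range n₀, v (η ^ l * (η ^ (i * n₀) * z))‖ := by
              apply Finset.prod_le_prod (fun i _ => hbpos.le)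
              intro i _
              exact hblb _ (hmem (i*n₀) z (mem_ball_zero_iff.2 hz1'))
      rw [hc₁eq]
      exact mul_le_mul hτpart hvpart (pow_nonneg hbpos.le m) (norm_nonneg _)
    -- the constant K
    set K : ℝ := ∑ k ∈ Finset.range n, ‖lam‖ ^ (n - 1 - k) * Mψ ^ k with hKdef
    have hKterm0 : ∀ k, 0 ≤ ‖lam‖ ^ (n - 1 - k) * Mψ ^ k := fun k => by positivity
    have hKpos : 0 < K := by
      rw [hKdef]
      apply Finset.sum_pos'
      · exact fun k _ => hKterm0 k
      · refine ⟨n-1, Finset.mem_range.2 (by omega), ?_⟩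
        have h0 : n - 1 - (n - 1) = 0 := by omega
        rw [h0, pow_zero, one_mul]
        positivity
    set W : ℝ := K₀ / c₁ * K with hWdef
    have hW0 : 0 < W := by positivity
    refine ⟨(2*W)⁻¹, by positivity, ?_⟩
    intro f hfB
    -- per-f analytic/continuity facts
    have hfan : AnalyticOn ℂ f (ball 0 1) := hfB.1
    have hfc := hfan.continuousOn
    have hrotf : ∀ (k:ℕ), AnalyticOn ℂ (fun z => f (η ^ k * z)) (ball (0:ℂ) 1) := fun k =>
      hfan.comp (hrot_an k) (hmaps k)
    set Fn : ℂ → ℂ := fun z => (∏ j ∈ Finset.range n, ψ (η ^ j * z)) * f (η ^ n * z) with hFndef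
    have hprod_an : ∀ (k:ℕ), AnalyticOn ℂ
        (fun z => ∏ j ∈ Finset.range k, ψ (η ^ j * z)) (ball (0:ℂ) 1) := by
      intro k
      apply St19_analyticOn_prod
      intro j
      exact hψan.comp (hrot_an j) (hmaps j)
    have hFn_an : AnalyticOn ℂ Fn (ball 0 1) := (hprod_an n).mul (hrotf n)
    have hrot1_an : AnalyticOn ℂ (fun z : ℂ => η * z) (ball (0:ℂ) 1) :=
      (analyticOn_const).mul (analyticOn_id)
    have hmaps1 : Set.MapsTo (fun z : ℂ => η * z) (ball (0:ℂ) 1) (ball (0:ℂ) 1) := by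
      intro z hz
      rw [mem_ball_zero_iff] at hz ⊢
      rw [norm_mul, hη, one_mul]
      exact hz
    have hg1_an : AnalyticOn ℂ (fun w => ψ w * f (η * w)) (ball (0:ℂ) 1) :=
      hψan.mul (hfan.comp hrot1_an hmaps1)
    set gf : ℂ → ℂ := fun w => ψ w * f (η * w) - lam * f w with hgfdef
    have hg_an : AnalyticOn ℂ gf (ball 0 1) :=
      hg1_an.sub ((analyticOn_const).mul hfan)
    have hgrot_an : ∀ (k:ℕ), AnalyticOn ℂ (fun z => gf (η ^ k * z)) (ball (0:ℂ) 1) := fun k =>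
      hg_an.comp (hrot_an k) (hmaps k)
    -- finiteness
    have hJf : St19J α p (ball 0 1) f < ∞ := St19J_lt_top hp hfB.2
    have hnBf : St19nB α p f ≠ ∞ := by
      unfold St19nB
      exact ENNReal.rpow_ne_top_of_nonneg (by positivity) hJf.ne
    have hnBrotf : ∀ (k:ℕ), St19nB α p (fun z => f (η ^ k * z)) ≠ ∞ := by
      intro k
      rw [St19nB_rot (η^k) (by rw [norm_pow, hη, one_pow]) f]
      exact hnBf
    have hnBFn : St19nB α p Fn ≠ ∞ := by
      have hb1 : St19nB α p Fn
          ≤ ENNReal.ofReal (Mψ ^ n) * St19nB α p (fun z => f (η ^ n * z)) := by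
        apply St19nB_mono hp (by positivity)
        intro z hz
        rw [hFndef]
        simp only [norm_mul]
        exact mul_le_mul_of_nonneg_right (hψprod n z hz) (norm_nonneg _)
      exact ne_top_of_le_ne_top (ENNReal.mul_ne_top ENNReal.ofReal_ne_top (hnBrotf n)) hb1
    have hnBg : St19nB α p gf ≠ ∞ := by
      have hsplit : St19nB α p gf
          = St19nB α p (fun z => (ψ z * f (η * z)) + ((-lam) * f z)) := by
        apply St19nB_congr; intro z _; rw [hgfdef]; ring
      have hb1 : St19nB α p gf
          ≤ ENNReal.ofReal Mψ * St19nB α p (fun z => f (η ^ 1 * z))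
            + ENNReal.ofReal ‖lam‖ * St19nB α p f := by
        rw [hsplit]
        refine le_trans (St19nB_add hp hg1_an.continuousOn
          ((analyticOn_const).mul hfan).continuousOn) ?_
        apply add_le_add
        · apply St19nB_mono hp hMψ0.le
          intro z hz
          rw [pow_one]
          rw [norm_mul]
          exact mul_le_mul_of_nonneg_right (hψM z hz) (norm_nonneg _)
        · apply St19nB_mono hp (norm_nonneg lam)
          intro z _
          rw [norm_mul, norm_neg]
      refine ne_top_of_le_ne_top ?_ hb1
      exact ENNReal.add_ne_top.2
        ⟨ENNReal.mul_ne_top ENNReal.ofReal_ne_top (hnBrotf 1),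
         ENNReal.mul_ne_top ENNReal.ofReal_ne_top hnBf⟩
    -- E1/E2 : lower bound via annulus
    have hE1 : St19J α p (ball 0 1) f
        ≤ κ * (ENNReal.ofReal c₁⁻¹ ^ p * St19J α p (ball 0 1) Fn) := by
      calc St19J α p (ball 0 1) f ≤ κ * St19J α p Ann f := hκ f hfan
        _ = κ * St19J α p Ann (fun z => f (η ^ n * z)) := by
            rw [St19J_rot (η^n) hηn hAnnMeas hAnnInv f]
        _ ≤ κ * (ENNReal.ofReal c₁⁻¹ ^ p * St19J α p Ann Fn) := by
            apply mul_le_mul_right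
            apply St19J_mono hp0.le hAnnMeas (by positivity)
            intro z hz
            have hlow := hψlow z hz
            have hFnz : ‖Fn z‖ = ‖∏ j ∈ Finset.range n, ψ (η ^ j * z)‖ * ‖f (η ^ n * z)‖ := by
              rw [hFndef]; simp only [norm_mul]
            calc ‖f (η ^ n * z)‖ = c₁⁻¹ * (c₁ * ‖f (η ^ n * z)‖) := by field_simp
              _ ≤ c₁⁻¹ * (‖∏ j ∈ Finset.range n, ψ (η ^ j * z)‖ * ‖f (η ^ n * z)‖) := by
                  apply mul_le_mul_of_nonneg_left _ (by positivity)
                  exact mul_le_mul_of_nonneg_right hlow (norm_nonneg _)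
              _ = c₁⁻¹ * ‖Fn z‖ := by rw [hFnz]
        _ ≤ κ * (ENNReal.ofReal c₁⁻¹ ^ p * St19J α p (ball 0 1) Fn) := by
            apply mul_le_mul_right
            apply mul_le_mul_right
            unfold St19J
            exact lintegral_mono_set (fun z hz => hz.1)
    have hE2 : St19nB α p f ≤ κ ^ p⁻¹ * ENNReal.ofReal c₁⁻¹ * St19nB α p Fn := by
      unfold St19nB
      calc (St19J α p (ball 0 1) f) ^ p⁻¹
          ≤ (κ * (ENNReal.ofReal c₁⁻¹ ^ p * St19J α p (ball 0 1) Fn)) ^ p⁻¹ :=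
            ENNReal.rpow_le_rpow hE1 (by positivity)
        _ = κ ^ p⁻¹ * ENNReal.ofReal c₁⁻¹ * (St19J α p (ball 0 1) Fn) ^ p⁻¹ := by
            rw [ENNReal.mul_rpow_of_nonneg _ _ (by positivity : (0:ℝ) ≤ p⁻¹),
              ENNReal.mul_rpow_of_nonneg _ _ (by positivity : (0:ℝ) ≤ p⁻¹),
              ← ENNReal.rpow_mul, mul_inv_cancel₀ hp0.ne', ENNReal.rpow_one, mul_assoc]
    -- telescoping
    set Hk : ℕ → ℂ → ℂ := fun k z => lam ^ (n - 1 - k) *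
        ((∏ j ∈ Finset.range k, ψ (η ^ j * z)) * gf (η ^ k * z)) with hHkdef
    have htel : ∀ z : ℂ, Fn z - lam ^ n * f z = ∑ k ∈ Finset.range n, Hk k z := by
      intro z
      have := St19_telescope ψ f η lam n z
      simp only [hHkdef, hgfdef]
      exact this
    set D : ℂ → ℂ := fun z => Fn z - lam ^ n * f z with hDdef
    have hD_an : AnalyticOn ℂ D (ball 0 1) := hFn_an.sub ((analyticOn_const).mul hfan)
    have hHk_cont : ∀ k, ContinuousOn (Hk k) (ball (0:ℂ) 1) := by
      intro k
      apply AnalyticOn.continuousOn (𝕜 := ℂ)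
      exact (analyticOn_const).mul ((hprod_an k).mul (hgrot_an k))
    have hE4 : St19nB α p D
        ≤ (∑ k ∈ Finset.range n, ENNReal.ofReal (‖lam‖ ^ (n-1-k) * Mψ ^ k))
            * St19nB α p gf := by
      have h1 : St19nB α p D = St19nB α p (fun z => ∑ k ∈ Finset.range n, Hk k z) :=
        St19nB_congr (fun z _ => htel z)
      rw [h1]
      refine le_trans (St19nB_sum hp n Hk hHk_cont) ?_
      rw [Finset.sum_mul]
      apply Finset.sum_le_sum
      intro k hk
      have hstep : St19nB α p (Hk k)
          ≤ ENNReal.ofReal (‖lam‖ ^ (n-1-k) * Mψ ^ k)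
            * St19nB α p (fun z => gf (η ^ k * z)) := by
        apply St19nB_mono hp (by positivity)
        intro z hz
        simp only [hHkdef, norm_mul, norm_pow]
        calc ‖lam‖ ^ (n-1-k) * (‖∏ j ∈ Finset.range k, ψ (η ^ j * z)‖ * ‖gf (η ^ k * z)‖)
            ≤ ‖lam‖ ^ (n-1-k) * (Mψ ^ k * ‖gf (η ^ k * z)‖) := by
              apply mul_le_mul_of_nonneg_left _ (by positivity)
              exact mul_le_mul_of_nonneg_right (hψprod k z hz) (norm_nonneg _)
          _ = ‖lam‖ ^ (n-1-k) * Mψ ^ k * ‖gf (η ^ k * z)‖ := by ring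
      rw [St19nB_rot (η^k) (by rw [norm_pow, hη, one_pow]) gf] at hstep
      exact hstep
    have hE3 : St19nB α p Fn ≤ St19nB α p D + ENNReal.ofReal (‖lam‖ ^ n) * St19nB α p f := by
      have h1 : St19nB α p Fn = St19nB α p (fun z => D z + lam ^ n * f z) :=
        St19nB_congr (fun z _ => by rw [hDdef]; ring)
      rw [h1]
      refine le_trans (St19nB_add hp hD_an.continuousOn
        ((analyticOn_const).mul hfan).continuousOn) ?_
      apply add_le_add_right
      apply St19nB_mono hp (by positivity)
      intro z _
      rw [norm_mul, norm_pow]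
    -- real versions
    have hsum_ne_top : (∑ k ∈ Finset.range n, ENNReal.ofReal (‖lam‖ ^ (n-1-k) * Mψ ^ k)) ≠ ∞ := by
      apply (ENNReal.sum_lt_top.2 (fun k _ => ENNReal.ofReal_lt_top)).ne
    have hnBD : St19nB α p D ≠ ∞ :=
      ne_top_of_le_ne_top (ENNReal.mul_ne_top hsum_ne_top hnBg) hE4
    set xR : ℝ := (St19nB α p f).toReal with hxRdef
    set FvR : ℝ := (St19nB α p Fn).toReal with hFvRdef
    set TR : ℝ := (St19nB α p D).toReal with hTRdef
    set GR : ℝ := (St19nB α p gf).toReal with hGRdef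
    have hx0 : 0 ≤ xR := ENNReal.toReal_nonneg
    have hGR0 : 0 ≤ GR := ENNReal.toReal_nonneg
    have hFvR0 : 0 ≤ FvR := ENNReal.toReal_nonneg
    have hr2 : xR ≤ K₀ * c₁⁻¹ * FvR := by
      have h1 := ENNReal.toReal_mono
        (ENNReal.mul_ne_top (ENNReal.mul_ne_top hκrfin ENNReal.ofReal_ne_top) hnBFn) hE2
      rw [ENNReal.toReal_mul, ENNReal.toReal_mul, ENNReal.toReal_ofReal (by positivity)] at h1
      calc xR ≤ (κ ^ p⁻¹).toReal * c₁⁻¹ * FvR := h1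
        _ ≤ K₀ * c₁⁻¹ * FvR := by
            apply mul_le_mul_of_nonneg_right _ hFvR0
            apply mul_le_mul_of_nonneg_right _ (by positivity)
            rw [hK₀]; linarith
    have hr4 : TR ≤ K * GR := by
      have h1 := ENNReal.toReal_mono (ENNReal.mul_ne_top hsum_ne_top hnBg) hE4
      rw [ENNReal.toReal_mul] at h1
      have h2 : (∑ k ∈ Finset.range n, ENNReal.ofReal (‖lam‖ ^ (n-1-k) * Mψ ^ k)).toReal
          = K := by
        rw [ENNReal.toReal_sum (fun k _ => ENNReal.ofReal_ne_top), hKdef]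
        apply Finset.sum_congr rfl
        intro k _
        rw [ENNReal.toReal_ofReal (hKterm0 k)]
      rw [h2] at h1
      exact h1
    have hr3 : FvR ≤ TR + ‖lam‖ ^ n * xR := by
      have h1 := ENNReal.toReal_mono
        (by exact ENNReal.add_ne_top.2 ⟨hnBD,
          ENNReal.mul_ne_top ENNReal.ofReal_ne_top hnBf⟩) hE3
      rw [ENNReal.toReal_add hnBD (ENNReal.mul_ne_top ENNReal.ofReal_ne_top hnBf),
        ENNReal.toReal_mul, ENNReal.toReal_ofReal (by positivity)] at h1
      exact h1
    -- combine
    have hcoef : K₀ * c₁⁻¹ * ‖lam‖ ^ n = K₀ * ρ ^ m := by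
      rw [hρdef, div_pow, hc₁def]
      have : ‖lam‖ ^ n = (‖lam‖ ^ n₀) ^ m := by rw [← pow_mul, hndef, Nat.mul_comm]
      rw [this]
      field_simp
    have hfinal : xR ≤ W * GR + (1/2) * xR := by
      calc xR ≤ K₀ * c₁⁻¹ * FvR := hr2
        _ ≤ K₀ * c₁⁻¹ * (TR + ‖lam‖ ^ n * xR) := by
            apply mul_le_mul_of_nonneg_left hr3 (by positivity)
        _ = K₀ * c₁⁻¹ * TR + (K₀ * c₁⁻¹ * ‖lam‖ ^ n) * xR := by ring
        _ ≤ K₀ * c₁⁻¹ * (K * GR) + (1/2) * xR := by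
            apply add_le_add
            · exact mul_le_mul_of_nonneg_left hr4 (by positivity)
            · rw [hcoef]
              exact mul_le_mul_of_nonneg_right hmain_small hx0
        _ = W * GR + (1/2) * xR := by rw [hWdef]; ring
    have hxG : xR ≤ 2 * W * GR := by linarith
    -- translate to bergNorm
    have hbf : bergNorm α p f = xR := St19_bergNorm_eq_nB hα hp hfc
    have hbg : bergNorm α p (fun z => ψ z * f (η * z) - lam * f z) = GR :=
      St19_bergNorm_eq_nB hα hp hg_an.continuousOn
    rw [hbf, hbg]
    rw [inv_mul_le_iff₀ (by positivity)]
    calc xR ≤ 2 * W * GR := hxG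
      _ = 2 * W * GR := rfl
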